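/- arXiv:0807.4875 — 3 statements merged into one kernel-verified Lean document; each statement's English description precedes it below -/
import Mathlib

section
/- For h = su(2) := span(P₅,P₆,P₇) ⊂ Λ²(ℝ⁸), the space K(h) of algebraic curvature tensors with values in h is non-trivial: there exists a non-zero quadrilinear map R : (ℝ⁸)⁴ → ℝ with R(X,Y,Z,V) = −R(Y,X,Z,V), with (Z,V) ↦ R(X,Y,Z,V) lying in h for all X,Y, and satisfying the first Bianchi identity R(X,Y,Z,V)+R(Y,Z,X,V)+R(Z,X,Y,V) = 0. -/
open scoped BigOperators
open Matrix

noncomputable section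
namespace Spin7Paper

/-- ℝ⁸ -/
abbrev V8 := Fin 8 → ℝ

/-- The space Λᵏ(ℝ⁸) of k-forms. -/
abbrev AltForm (k : ℕ) := AlternatingMap ℝ V8 ℝ (Fin k)

/-- standard basis vector -/
def eVec (i : Fin 8) : V8 := Pi.single i 1

/-- basis k-form e_{i₁…i_k} -/
def eForm {k : ℕ} (idx : Fin k → Fin 8) : AltForm k :=
  (Matrix.detRowAlternating : AlternatingMap ℝ (Fin k → ℝ) ℝ (Fin k)).compLinearMap
    (LinearMap.funLeft ℝ ℝ idx)

def e2 (i j : Fin 8) : AltForm 2 := eForm ![i, j]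
def e3 (i j k : Fin 8) : AltForm 3 := eForm ![i, j, k]
def e4 (i j k l : Fin 8) : AltForm 4 := eForm ![i, j, k, l]

/-- the 2-forms P₁,…,P₈ (note: indices here are 0-based). -/
def P1 : AltForm 2 := e2 2 4 + e2 3 5
def P2 : AltForm 2 := e2 2 5 - e2 3 4
def P3 : AltForm 2 := e2 0 4 + e2 1 5
def P4 : AltForm 2 := e2 0 5 - e2 1 4
def P5 : AltForm 2 := e2 0 2 + e2 1 3
def P6 : AltForm 2 := e2 0 3 - e2 1 2
def P7 : AltForm 2 := e2 0 1 - e2 2 3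
def P8 : AltForm 2 := e2 2 3 - e2 4 5
def Q1 : AltForm 2 := (2 : ℝ) • e2 0 6 - e2 2 4 + e2 3 5
def Q2 : AltForm 2 := (2 : ℝ) • e2 1 6 + e2 2 5 + e2 3 4
def Q3 : AltForm 2 := (2 : ℝ) • e2 2 6 + e2 0 4 - e2 1 5
def Q4 : AltForm 2 := (2 : ℝ) • e2 3 6 - e2 0 5 - e2 1 4
def Q5 : AltForm 2 := (2 : ℝ) • e2 4 6 - e2 0 2 + e2 1 3
def Q6 : AltForm 2 := (2 : ℝ) • e2 5 6 + e2 0 3 + e2 1 2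
def S1 : AltForm 2 := e2 0 7 - e2 1 6
def S2 : AltForm 2 := e2 1 7 + e2 0 6
def S3 : AltForm 2 := e2 2 7 - e2 3 6
def S4 : AltForm 2 := e2 3 7 + e2 2 6
def S5 : AltForm 2 := e2 4 7 - e2 5 6
def S6 : AltForm 2 := e2 5 7 + e2 4 6
def S7 : AltForm 2 := e2 6 7 - e2 4 5

/-- the Lie algebra spin(7) as the span of the 21 two-forms above -/
def spin7 : Submodule ℝ (AltForm 2) :=
  Submodule.span ℝ {P1, P2, P3, P4, P5, P6, P7, P8, Q1, Q2, Q3, Q4, Q5, Q6,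
    S1, S2, S3, S4, S5, S6, S7}

/-- the Spin(7) fundamental 4-form Φ -/
def Phi : AltForm 4 :=
  e4 0 1 6 7 + e4 2 3 6 7 + e4 4 5 6 7 + e4 1 3 5 7 - e4 1 2 4 7 - e4 0 3 4 7
    - e4 0 2 5 7 + e4 0 1 2 3 + e4 0 1 4 5 + e4 2 3 4 5 + e4 0 2 4 6 - e4 0 3 5 6
    - e4 1 2 5 6 - e4 1 3 4 6

/-- the skew-symmetric endomorphism of ℝ⁸ associated with a 2-form:
`x ↦ Σ_{i<j} ω_{ij} (⟨e_i,x⟩ e_j − ⟨e_j,x⟩ e_i)`. -/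
def toEnd (ω : AltForm 2) : V8 →ₗ[ℝ] V8 where
  toFun x := fun j => ∑ i, ω ![eVec i, eVec j] * x i
  map_add' x y := by
    funext j
    simp [mul_add, Finset.sum_add_distrib]
  map_smul' c x := by
    funext j
    simp only [Pi.smul_apply, smul_eq_mul, RingHom.id_apply, Finset.mul_sum]
    exact Finset.sum_congr rfl fun i _ => by ring

/-- the action of a skew-symmetric endomorphism `A` on k-forms:
`(A·τ)(X₁,…,X_k) = −Σ_m τ(X₁,…,A X_m,…,X_k)`. -/
def actEnd {k : ℕ} (A : V8 →ₗ[ℝ] V8) (τ : AltForm k) : (Fin k → V8) → ℝ :=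
  fun X => -∑ m, τ (Function.update X m (A (X m)))

lemma toEnd_add (ω η : AltForm 2) : toEnd (ω + η) = toEnd ω + toEnd η := by
  apply LinearMap.ext; intro x
  funext j
  simp [toEnd, add_mul, Finset.sum_add_distrib]

lemma toEnd_smul (c : ℝ) (ω : AltForm 2) : toEnd (c • ω) = c • toEnd ω := by
  apply LinearMap.ext; intro x
  funext j
  simp only [toEnd, AlternatingMap.smul_apply, smul_eq_mul, LinearMap.coe_mk, AddHom.coe_mk,
    LinearMap.smul_apply, Pi.smul_apply, Finset.mul_sum]
  exact Finset.sum_congr rfl fun i _ => by ring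

lemma toEnd_zero : toEnd (0 : AltForm 2) = 0 := by
  apply LinearMap.ext; intro x
  funext j
  simp [toEnd]

lemma actEnd_add {k : ℕ} (A B : V8 →ₗ[ℝ] V8) (τ : AltForm k) (X : Fin k → V8) :
    actEnd (A + B) τ X = actEnd A τ X + actEnd B τ X := by
  simp only [actEnd, LinearMap.add_apply]
  rw [← neg_add, ← Finset.sum_add_distrib]
  congr 1
  exact Finset.sum_congr rfl fun m _ => (τ.toMultilinearMap.map_update_add X m _ _)

lemma actEnd_smul {k : ℕ} (c : ℝ) (A : V8 →ₗ[ℝ] V8) (τ : AltForm k) (X : Fin k → V8) :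
    actEnd (c • A) τ X = c * actEnd A τ X := by
  simp only [actEnd, LinearMap.smul_apply, mul_neg, Finset.mul_sum]
  congr 1
  exact Finset.sum_congr rfl fun m _ => by
    simpa using (τ.toMultilinearMap.map_update_smul X m c (A (X m)))

lemma actEnd_zero {k : ℕ} (τ : AltForm k) (X : Fin k → V8) :
    actEnd (0 : V8 →ₗ[ℝ] V8) τ X = 0 := by
  simp [actEnd, MultilinearMap.map_update_zero]

/-- the isotropy algebra in spin(7) of a 3-form T -/
def isoSub (T : AltForm 3) : Submodule ℝ (AltForm 2) where
  carrier := {ω | ω ∈ spin7 ∧ ∀ X, actEnd (toEnd ω) T X = 0}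
  zero_mem' := ⟨spin7.zero_mem, fun X => by rw [toEnd_zero]; exact actEnd_zero T X⟩
  add_mem' := by
    rintro a b ⟨ha1, ha2⟩ ⟨hb1, hb2⟩
    exact ⟨spin7.add_mem ha1 hb1, fun X => by
      rw [toEnd_add, actEnd_add, ha2 X, hb2 X, add_zero]⟩
  smul_mem' := by
    rintro c a ⟨ha1, ha2⟩
    exact ⟨spin7.smul_mem c ha1, fun X => by
      rw [toEnd_smul, actEnd_smul, ha2 X, mul_zero]⟩

/-- E_{jk}: +1 in entry (j,k), −1 in entry (k,j) (0-based indices) -/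
def Em (j k : Fin 8) : Matrix (Fin 8) (Fin 8) ℝ :=
  Matrix.single j k 1 - Matrix.single k j 1

def Mmat : Fin 7 → Matrix (Fin 8) (Fin 8) ℝ :=
  ![Em 0 7 + Em 1 6 - Em 2 5 - Em 3 4,
    -Em 0 6 + Em 1 7 + Em 2 4 - Em 3 5,
    -Em 0 5 + Em 1 4 - Em 2 7 + Em 3 6,
    -Em 0 4 - Em 1 5 - Em 2 6 - Em 3 7,
    -Em 0 2 - Em 1 3 + Em 4 6 + Em 5 7,
    Em 0 3 - Em 1 2 - Em 4 7 + Em 5 6,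
    Em 0 1 - Em 2 3 - Em 4 5 + Em 6 7]

/-- 16×16 matrix from four 8×8 blocks -/
def blk (A B C D : Matrix (Fin 8) (Fin 8) ℝ) : Matrix (Fin 16) (Fin 16) ℝ :=
  Matrix.reindex finSumFinEquiv finSumFinEquiv (Matrix.fromBlocks A B C D)

/-- the Clifford matrices γ₁,…,γ₈ -/
def gamma : Fin 8 → Matrix (Fin 16) (Fin 16) ℝ :=
  Fin.snoc (fun i => blk 0 (Mmat i) (Mmat i) 0) (blk 0 1 (-1) 0)

/-- the space of real spinors Δ₈ = ℝ¹⁶ -/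
abbrev Spinor := Fin 16 → ℝ

/-- standard basis spinor (0-based: `psi 0` is Ψ₁, …, `psi 15` is Ψ₁₆) -/
def psi (k : Fin 16) : Spinor := Pi.single k 1

/-- the spinor Ψ₀ = Ψ₉ − Ψ₁₀ -/
def Psi0 : Spinor := psi 8 - psi 9

def gammaProd {p : ℕ} (f : Fin p → Fin 8) : Matrix (Fin 16) (Fin 16) ℝ :=
  (List.ofFn fun a => gamma (f a)).prod

/-- the Clifford action ρ of a p-form, as a 16×16 matrix; on an alternating form this
equals `Σ_{i₁<…<i_p} T(e_{i₁},…,e_{i_p}) γ_{i₁}⋯γ_{i_p}`. -/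
def rhoF {p : ℕ} (T : (Fin p → V8) → ℝ) : Matrix (Fin 16) (Fin 16) ℝ :=
  (p.factorial : ℝ)⁻¹ • ∑ f : Fin p → Fin 8, T (fun a => eVec (f a)) • gammaProd f

/-- the Clifford action of a vector X: ρ(X) = Σ xᵢ γᵢ. -/
def rhoVec (X : V8) : Matrix (Fin 16) (Fin 16) ℝ := ∑ i, X i • gamma i

/-- the wedge product (on alternating inputs):
`(α∧β)(X) = (1/(p! q!)) Σ_σ sgn σ · α(X_{σ∘castAdd}) · β(X_{σ∘natAdd})`. -/
def wedgeF {p q : ℕ} (α : (Fin p → V8) → ℝ) (β : (Fin q → V8) → ℝ) :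
    (Fin (p + q) → V8) → ℝ :=
  fun X => ((p.factorial * q.factorial : ℕ) : ℝ)⁻¹ *
    ∑ σ : Equiv.Perm (Fin (p + q)), ((Equiv.Perm.sign σ : ℤ) : ℝ) *
      α (fun i => X (σ (Fin.castAdd q i))) * β (fun j => X (σ (Fin.natAdd p j)))

/-- contraction X⌟τ -/
def contrF {p : ℕ} (X : V8) (τ : (Fin (p + 1) → V8) → ℝ) : (Fin p → V8) → ℝ :=
  fun Y => τ (Fin.cons X Y)

/-- the inner product on p-forms making the e_{i₁…i_p} (i₁<…<i_p) orthonormal -/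
def formInnerF {p : ℕ} (α β : (Fin p → V8) → ℝ) : ℝ :=
  (p.factorial : ℝ)⁻¹ * ∑ f : Fin p → Fin 8,
    α (fun a => eVec (f a)) * β (fun a => eVec (f a))

/-- Λ³₈ = {X⌟Φ : X ∈ ℝ⁸} -/
def Lam38 : Submodule ℝ (AltForm 3) := LinearMap.range (AlternatingMap.curryLeft Phi)

lemma wedgeF_add_left {p q : ℕ} (a b : AltForm p) (β : (Fin q → V8) → ℝ)
    (X : Fin (p + q) → V8) :
    wedgeF (⇑(a + b)) β X = wedgeF ⇑a β X + wedgeF ⇑b β X := by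
  simp only [wedgeF, AlternatingMap.add_apply, add_mul, mul_add, Finset.sum_add_distrib]

lemma wedgeF_smul_left {p q : ℕ} (c : ℝ) (a : AltForm p) (β : (Fin q → V8) → ℝ)
    (X : Fin (p + q) → V8) :
    wedgeF (⇑(c • a)) β X = c * wedgeF ⇑a β X := by
  simp only [wedgeF, AlternatingMap.smul_apply, smul_eq_mul, Finset.mul_sum]
  exact Finset.sum_congr rfl fun σ _ => by ring

/-- Λ³₄₈ = {γ ∈ Λ³(ℝ⁸) : γ∧Φ = 0} -/
def Lam348 : Submodule ℝ (AltForm 3) where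
  carrier := {γ | ∀ X, wedgeF ⇑γ ⇑Phi X = 0}
  zero_mem' := fun X => by
    simp only [wedgeF, AlternatingMap.zero_apply, mul_zero, zero_mul,
      Finset.sum_const_zero]
  add_mem' := by
    intro a b ha hb X
    rw [wedgeF_add_left, ha X, hb X, add_zero]
  smul_mem' := by
    intro c a ha X
    rw [wedgeF_smul_left, ha X, mul_zero]


/-! For 2-forms ωₐ and scalars cₐ, the tensor R = Σₐ cₐ ωₐ ⊗ ωₐ is skew in its first pair and takes
values in span(ωₐ); its Bianchi sum is ½ Σₐ cₐ (ωₐ ∧ ωₐ). The forms P₅, P₆, P₇ are anti-self-dual on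
span(e₁,…,e₄), so P₅ ∧ P₅ = P₆ ∧ P₆ = P₇ ∧ P₇ = −2 e₁₂₃₄, and R = P₅ ⊗ P₅ + P₆ ⊗ P₆ − 2 P₇ ⊗ P₇
is a non-zero element of K(su(2)). -/

theorem _root_.AlternatingMap.map_swap_fin_two {R M N : Type*} [CommRing R] [AddCommGroup M]
    [Module R M] [AddCommGroup N] [Module R N] (ω : M [⋀^Fin 2]→ₗ[R] N) (X Y : M) :
    ω ![Y, X] = -ω ![X, Y] := by
  convert ω.map_swap ![X, Y] (i := 0) (j := 1) (by decide) using 2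
  ext i
  fin_cases i <;> rfl

section SymTensorSum

variable {R M ι : Type*} [CommRing R] [AddCommGroup M] [Module R M] [Fintype ι]

def tensorForm (ω η : M [⋀^Fin 2]→ₗ[R] R) : MultilinearMap R (fun _ : Fin 4 => M) R :=
  (LinearMap.mul' R R).compMultilinearMap
    ((ω.toMultilinearMap.domCoprod η.toMultilinearMap).domDomCongr finSumFinEquiv)

theorem tensorForm_apply (ω η : M [⋀^Fin 2]→ₗ[R] R) (X Y Z V : M) :
    tensorForm ω η ![X, Y, Z, V] = ω ![X, Y] * η ![Z, V] := by
  simp only [tensorForm, LinearMap.compMultilinearMap_apply, MultilinearMap.domDomCongr_apply,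
    MultilinearMap.domCoprod_apply, LinearMap.mul'_apply, AlternatingMap.coe_multilinearMap]
  congr 2 <;> funext i <;> fin_cases i <;> rfl

def symTensorSum (c : ι → R) (ω : ι → M [⋀^Fin 2]→ₗ[R] R) :
    MultilinearMap R (fun _ : Fin 4 => M) R :=
  ∑ a, c a • tensorForm (ω a) (ω a)

theorem symTensorSum_apply (c : ι → R) (ω : ι → M [⋀^Fin 2]→ₗ[R] R) (X Y Z V : M) :
    symTensorSum c ω ![X, Y, Z, V] = ∑ a, c a * ω a ![X, Y] * ω a ![Z, V] := by
  simp only [symTensorSum, _root_.sum_apply, _root_.smul_apply, tensorForm_apply, smul_eq_mul,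
    mul_assoc]

theorem symTensorSum_antisymm (c : ι → R) (ω : ι → M [⋀^Fin 2]→ₗ[R] R) (X Y Z V : M) :
    symTensorSum c ω ![X, Y, Z, V] = -symTensorSum c ω ![Y, X, Z, V] := by
  simp only [symTensorSum_apply, AlternatingMap.map_swap_fin_two (ω _) X Y, mul_neg, neg_mul,
    Finset.sum_neg_distrib, neg_neg]

/-- Half of `(ω ∧ ω)(X, Y, Z, V)`. -/
def cyclicSq (ω : M [⋀^Fin 2]→ₗ[R] R) (X Y Z V : M) : R :=
  ω ![X, Y] * ω ![Z, V] + ω ![Y, Z] * ω ![X, V] + ω ![Z, X] * ω ![Y, V]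

theorem symTensorSum_cyclic (c : ι → R) (ω : ι → M [⋀^Fin 2]→ₗ[R] R) (X Y Z V : M) :
    symTensorSum c ω ![X, Y, Z, V] + symTensorSum c ω ![Y, Z, X, V] +
      symTensorSum c ω ![Z, X, Y, V] = ∑ a, c a * cyclicSq (ω a) X Y Z V := by
  simp only [symTensorSum_apply, cyclicSq, ← Finset.sum_add_distrib]
  exact Finset.sum_congr rfl fun a _ => by ring

end SymTensorSum

theorem eForm_apply {k : ℕ} (idx : Fin k → Fin 8) (X : Fin k → V8) :
    eForm idx X = (Matrix.of fun a b => X a (idx b)).det :=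
  rfl

theorem e2_apply (i j : Fin 8) (X Y : V8) : e2 i j ![X, Y] = X i * Y j - X j * Y i := by
  simp [e2, eForm_apply, Matrix.det_fin_two]

def suTwoBasis : Fin 3 → AltForm 2 := ![P5, P6, P7]

theorem cyclicSq_suTwoBasis (k : Fin 3) (X Y Z V : V8) :
    cyclicSq (suTwoBasis k) X Y Z V = -e4 0 1 2 3 ![X, Y, Z, V] := by
  fin_cases k <;>
  · simp [suTwoBasis, cyclicSq, P5, P6, P7, e2_apply, e4, eForm_apply, Matrix.det_succ_row_zero,
      Fin.sum_univ_succ, Fin.succAbove]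
    ring

def suTwoCurvature : MultilinearMap ℝ (fun _ : Fin 4 => V8) ℝ :=
  symTensorSum ![1, 1, -2] suTwoBasis

theorem suTwoCurvature_apply (X Y Z V : V8) :
    suTwoCurvature ![X, Y, Z, V] =
      P5 ![X, Y] * P5 ![Z, V] + P6 ![X, Y] * P6 ![Z, V] - 2 * P7 ![X, Y] * P7 ![Z, V] := by
  simp only [suTwoCurvature, suTwoBasis, symTensorSum_apply, Fin.sum_univ_three, cons_val_zero,
    cons_val_one, cons_val]
  ring

theorem suTwoCurvature_ne_zero : suTwoCurvature ≠ 0 := by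
  intro h
  have := congrArg (· ![eVec 0, eVec 1, eVec 0, eVec 1]) h
  simp [suTwoCurvature_apply, P5, P6, P7, e2_apply, eVec] at this

/-- K(su(2)) is non-trivial. -/
theorem statement3 :
    ∃ R : MultilinearMap ℝ (fun _ : Fin 4 => V8) ℝ,
      R ≠ 0 ∧
      (∀ X Y Z V : V8, R ![X, Y, Z, V] = -R ![Y, X, Z, V]) ∧
      (∀ X Y : V8, ∃ a b c : ℝ, ∀ Z V : V8,
        R ![X, Y, Z, V] = a * P5 ![Z, V] + b * P6 ![Z, V] + c * P7 ![Z, V]) ∧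
      (∀ X Y Z V : V8, R ![X, Y, Z, V] + R ![Y, Z, X, V] + R ![Z, X, Y, V] = 0) := by
  refine ⟨suTwoCurvature, suTwoCurvature_ne_zero, symTensorSum_antisymm _ _, ?_, ?_⟩
  · intro X Y
    exact ⟨P5 ![X, Y], P6 ![X, Y], -2 * P7 ![X, Y], fun Z V => by
      rw [suTwoCurvature_apply]; ring⟩
  · intro X Y Z V
    simp only [suTwoCurvature, symTensorSum_cyclic, cyclicSq_suTwoBasis, ← Finset.sum_mul,
      Fin.sum_univ_three, cons_val_zero, cons_val_one, cons_val_two, tail_cons, head_cons]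
    norm_num

end Spin7Paper
end
end

section
/- For h = su_c(2) := span(P₇+2P₈, Q₅, Q₆) ⊂ Λ²(ℝ⁸), the space K(h) of algebraic curvature tensors with values in h is trivial: every quadrilinear map R : (ℝ⁸)⁴ → ℝ with R(X,Y,Z,V) = −R(Y,X,Z,V), with (Z,V) ↦ R(X,Y,Z,V) lying in h for all X,Y, and satisfying the first Bianchi identity R(X,Y,Z,V)+R(Y,Z,X,V)+R(Z,X,Y,V) = 0, is identically zero. -/
open scoped BigOperators
open Matrix

noncomputable section
namespace Spin7Paper

/-! With values in `h = span(ω₁, ω₂, ω₃)`, the pair symmetry `R(X,Y,Z,V) = R(Z,V,X,Y)` that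
follows from the Bianchi identity forces `R = Σ C_ab ω_a ⊗ ω_b` for a 3 × 3 matrix `C`. For
`su_c(2)` each entry `C_ab` is isolated by the Bianchi identity on a quadruple of basis vectors
whose two pairs are seen by `ω_a` and `ω_b` alone and whose two cross pairs are killed by all
three forms; hence `C = 0`. -/

section CurvatureTensor

variable {K M ι : Type*} [CommRing K] [AddCommGroup M] [Module K M] [Fintype ι]

theorem AlternatingMap.apply_fin_two_swap (ω : AlternatingMap K M K (Fin 2)) (Z V : M) :
    ω ![V, Z] = -ω ![Z, V] := by
  have h : ![Z, V] ∘ Equiv.swap (0 : Fin 2) 1 = ![V, Z] := by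
    funext a; fin_cases a <;> rfl
  rw [← h]
  exact ω.map_swap ![Z, V] (by decide)

def HasValuesIn (R : MultilinearMap K (fun _ : Fin 4 => M) K)
    (ω : ι → AlternatingMap K M K (Fin 2)) : Prop :=
  ∀ X Y : M, ∃ c : ι → K, ∀ Z V : M, R ![X, Y, Z, V] = ∑ i, c i * ω i ![Z, V]

theorem apply_pair_swap_of_bianchi [NoZeroDivisors K] [NeZero (2 : K)]
    (R : MultilinearMap K (fun _ : Fin 4 => M) K)
    (hleft : ∀ X Y Z V : M, R ![X, Y, Z, V] = -R ![Y, X, Z, V])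
    (hright : ∀ X Y Z V : M, R ![X, Y, V, Z] = -R ![X, Y, Z, V])
    (hbianchi : ∀ X Y Z V : M, R ![X, Y, Z, V] + R ![Y, Z, X, V] + R ![Z, X, Y, V] = 0)
    (X Y Z V : M) : R ![X, Y, Z, V] = R ![Z, V, X, Y] := by
  have h2 : (2 : K) * (R ![X, Y, Z, V] - R ![Z, V, X, Y]) = 0 := by
    linear_combination hbianchi X Y Z V + hbianchi Y Z V X - hbianchi Z V X Y
      - hbianchi V X Y Z + hright X Y Z V - hleft X Z Y V + hright X Z Y V + hleft X V Y Z
      - hright X V Y Z + hleft X V Z Y - hright Y Z X V + hright Y V X Z - hleft Y V Z X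
      - hright Z V X Y
  exact sub_eq_zero.mp ((mul_eq_zero.mp h2).resolve_left two_ne_zero)

namespace HasValuesIn

variable {R : MultilinearMap K (fun _ : Fin 4 => M) K} {ω : ι → AlternatingMap K M K (Fin 2)}

theorem apply_swap_right (hR : HasValuesIn R ω) (X Y Z V : M) :
    R ![X, Y, V, Z] = -R ![X, Y, Z, V] := by
  obtain ⟨c, hc⟩ := hR X Y
  rw [hc, hc, ← Finset.sum_neg_distrib]
  exact Finset.sum_congr rfl fun i _ => by rw [AlternatingMap.apply_fin_two_swap, mul_neg]

variable [DecidableEq ι] {u v : ι → M}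

theorem apply_eq_sum_apply_dual (hR : HasValuesIn R ω)
    (hdual : ∀ i j, ω i ![u j, v j] = if i = j then 1 else 0) (X Y Z V : M) :
    R ![X, Y, Z, V] = ∑ i, R ![X, Y, u i, v i] * ω i ![Z, V] := by
  obtain ⟨c, hc⟩ := hR X Y
  have hcoeff : ∀ j, R ![X, Y, u j, v j] = c j := fun j => by
    simp [hc, hdual]
  simp only [hcoeff]
  exact hc Z V

theorem apply_eq_sum_sum [NoZeroDivisors K] [NeZero (2 : K)] (hR : HasValuesIn R ω)
    (hleft : ∀ X Y Z V : M, R ![X, Y, Z, V] = -R ![Y, X, Z, V])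
    (hbianchi : ∀ X Y Z V : M, R ![X, Y, Z, V] + R ![Y, Z, X, V] + R ![Z, X, Y, V] = 0)
    (hdual : ∀ i j, ω i ![u j, v j] = if i = j then 1 else 0) (X Y Z V : M) :
    R ![X, Y, Z, V] = ∑ i, ∑ j, R ![u i, v i, u j, v j] * ω i ![X, Y] * ω j ![Z, V] := by
  have hswap := apply_pair_swap_of_bianchi R hleft hR.apply_swap_right hbianchi
  rw [hR.apply_eq_sum_apply_dual hdual, Finset.sum_comm]
  refine Finset.sum_congr rfl fun j _ => ?_
  rw [hswap, hR.apply_eq_sum_apply_dual hdual, Finset.sum_mul]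
  exact Finset.sum_congr rfl fun i _ => by rw [hswap]

end HasValuesIn

end CurvatureTensor

def suc2 : Fin 3 → AltForm 2 := ![P7 + (2 : ℝ) • P8, Q5, Q6]

def suc2DualLeft : Fin 3 → V8 := ![eVec 0, eVec 1, eVec 0]

def suc2DualRight : Fin 3 → V8 := ![eVec 1, eVec 3, eVec 3]

theorem suc2_apply_dual (i j : Fin 3) :
    suc2 i ![suc2DualLeft j, suc2DualRight j] = if i = j then 1 else 0 := by
  fin_cases i <;> fin_cases j <;>
    simp [suc2, suc2DualLeft, suc2DualRight, P7, P8, Q5, Q6, e2_apply, eVec]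

def suc2Tensor (C : Matrix (Fin 3) (Fin 3) ℝ) (X Y Z V : V8) : ℝ :=
  ∑ a, ∑ b, C a b * suc2 a ![X, Y] * suc2 b ![Z, V]

theorem eq_zero_of_suc2Tensor_bianchi (C : Matrix (Fin 3) (Fin 3) ℝ)
    (hB : ∀ X Y Z V, suc2Tensor C X Y Z V + suc2Tensor C Y Z X V + suc2Tensor C Z X Y V = 0) :
    C = 0 := by
  have h := fun i j k l : Fin 8 => hB (eVec i) (eVec j) (eVec k) (eVec l)
  have h00 := h 0 1 4 5
  have h11 := h 0 2 4 6
  have h22 := h 0 3 5 6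
  have h01 := h 0 1 4 6
  have h02 := h 0 1 5 6
  have h21 := h 0 3 4 6
  have h10 := h 4 6 0 1
  have h20 := h 5 6 0 1
  have h12 := h 4 6 0 3
  simp [suc2Tensor, Fin.sum_univ_three, suc2, P7, P8, Q5, Q6, e2_apply, eVec]
    at h00 h11 h22 h01 h02 h21 h10 h20 h12
  ext a b
  fin_cases a <;> fin_cases b <;> assumption

/-- K(su_c(2)) is trivial. -/
theorem statement4 (R : MultilinearMap ℝ (fun _ : Fin 4 => V8) ℝ)
    (hanti : ∀ X Y Z V : V8, R ![X, Y, Z, V] = -R ![Y, X, Z, V])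
    (hval : ∀ X Y : V8, ∃ a b c : ℝ, ∀ Z V : V8,
      R ![X, Y, Z, V] = a * (P7 + (2 : ℝ) • P8) ![Z, V] + b * Q5 ![Z, V] + c * Q6 ![Z, V])
    (hbianchi : ∀ X Y Z V : V8, R ![X, Y, Z, V] + R ![Y, Z, X, V] + R ![Z, X, Y, V] = 0) :
    R = 0 := by
  have hR : HasValuesIn R suc2 := fun X Y => by
    obtain ⟨a, b, c, h⟩ := hval X Y
    exact ⟨![a, b, c], fun Z V => by simp [h, Fin.sum_univ_three, suc2]⟩
  let C : Matrix (Fin 3) (Fin 3) ℝ := Matrix.of fun i j =>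
    R ![suc2DualLeft i, suc2DualRight i, suc2DualLeft j, suc2DualRight j]
  have hexpand : ∀ X Y Z V, R ![X, Y, Z, V] = suc2Tensor C X Y Z V :=
    hR.apply_eq_sum_sum hanti hbianchi suc2_apply_dual
  have hC : C = 0 := eq_zero_of_suc2Tensor_bianchi C fun X Y Z V => by
    simpa only [hexpand] using hbianchi X Y Z V
  refine MultilinearMap.ext fun x => ?_
  have hx : ![x 0, x 1, x 2, x 3] = x := by
    ext i; fin_cases i <;> rfl
  rw [← hx, hexpand, hC]
  simp [suc2Tensor]

end Spin7Paper
end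
end

section
/- For every 3-form T on ℝ⁸, the 8-form Σ_{i=1}^{8} (e_i⌟T) ∧ (e_i⌟(Φ∧T)) vanishes identically. -/
open scoped BigOperators
open Matrix

noncomputable section
namespace Spin7Paper

def wedge {p q : ℕ} (α : AltForm p) (β : AltForm q) : AltForm (p + q) :=
  ((p.factorial * q.factorial : ℕ) : ℝ)⁻¹ • MultilinearMap.alternatization
    (((LinearMap.mul' ℝ ℝ).compMultilinearMap
      (α.toMultilinearMap.domCoprod β.toMultilinearMap)).domDomCongr finSumFinEquiv)

lemma coe_wedge {p q : ℕ} (α : AltForm p) (β : AltForm q) : ⇑(wedge α β) = wedgeF ⇑α ⇑β := by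
  funext X
  simp only [wedge, wedgeF, AlternatingMap.smul_apply, MultilinearMap.alternatization_apply,
    MultilinearMap.domDomCongr_apply, LinearMap.compMultilinearMap_apply,
    MultilinearMap.domCoprod_apply, finSumFinEquiv_apply_left, finSumFinEquiv_apply_right,
    LinearMap.mul'_apply, Units.smul_def, zsmul_eq_mul, smul_eq_mul, mul_assoc]
  rfl

lemma contrF_eq_curryLeft {n : ℕ} (x : V8) (α : AltForm (n + 1)) :
    contrF x ⇑α = ⇑(α.curryLeft x) :=
  rfl

lemma curryLeft_apply_eq_zero_of_eq {n : ℕ} (α : AltForm (n + 1)) {x : V8} {Y : Fin n → V8}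
    {j : Fin n} (h : Y j = x) : α.curryLeft x Y = 0 :=
  α.map_eq_zero_of_eq _ (i := 0) (j := j.succ) (by simp [h]) (Fin.succ_ne_zero j).symm

/-- A top-degree form is determined by its values on permutations of the standard basis, and
there every term of the antisymmetrization feeds `eᵢ` to a factor that already contains it. -/
lemma wedge_curryLeft_curryLeft_eVec {p q : ℕ} (hpq : p + q = 8) (α : AltForm (p + 1))
    (β : AltForm (q + 1)) (i : Fin 8) :
    wedge (α.curryLeft (eVec i)) (β.curryLeft (eVec i)) = 0 := by
  refine (Pi.basisFun ℝ (Fin 8)).ext_alternating fun v hv => ?_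
  have hbij : Function.Bijective v :=
    (Fintype.bijective_iff_injective_and_card v).2 ⟨hv, by simp [hpq]⟩
  obtain ⟨k, hk⟩ := hbij.2 i
  rw [coe_wedge, AlternatingMap.zero_apply, wedgeF]
  refine mul_eq_zero_of_right _ (Finset.sum_eq_zero fun σ _ => ?_)
  have hvk : Pi.basisFun ℝ (Fin 8) (v (σ (σ.symm k))) = eVec i := by
    rw [σ.apply_symm_apply, hk, Pi.basisFun_apply]; rfl
  obtain ⟨a | b, hab⟩ := finSumFinEquiv.surjective (σ.symm k)
  · rw [finSumFinEquiv_apply_left] at hab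
    rw [curryLeft_apply_eq_zero_of_eq α (j := a) (by simpa [hab] using hvk),
      mul_zero, zero_mul]
  · rw [finSumFinEquiv_apply_right] at hab
    rw [curryLeft_apply_eq_zero_of_eq β (j := b) (by simpa [hab] using hvk),
      mul_zero]

/-- Σᵢ (eᵢ⌟T) ∧ (eᵢ⌟(Φ∧T)) = 0 for every 3-form T. -/
theorem statement9 (T : AltForm 3) (X : Fin 8 → V8) :
    ∑ i, wedgeF (p := 2) (q := 6) (contrF (eVec i) ⇑T)
      (contrF (p := 6) (eVec i) (wedgeF (p := 4) (q := 3) ⇑Phi ⇑T)) X = 0 := by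
  refine Finset.sum_eq_zero fun i _ => ?_
  rw [← coe_wedge, contrF_eq_curryLeft, contrF_eq_curryLeft, ← coe_wedge,
    wedge_curryLeft_curryLeft_eVec rfl, AlternatingMap.zero_apply]

end Spin7Paper
end
end
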